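/- There exists an automatic successor tree whose Cantor–Bendixson rank is exactly ω, and there exists an automatic successor tree whose Cantor–Bendixson rank is exactly ω + 1. -/

import Mathlib

namespace AutoStruct

/-! ### Regular languages, convolutions, regular relations -/

/-- A language is regular if it is accepted by a DFA with finitely many states. -/
def IsRegularLang {α : Type} (L : Set (List α)) : Prop :=
  ∃ (σ : Type) (_ : Fintype σ) (M : DFA α σ), M.accepts = L

/-- Convolution of a pair of words, using `none` as the padding symbol `◇`. -/
def conv2 {α : Type} (u v : List α) : List (Option α × Option α) :=
  (List.range (max u.length v.length)).map fun k => (u[k]?, v[k]?)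

/-- Convolution of an `n`-tuple of words, using `none` as the padding symbol `◇`. -/
def conv {α : Type} {n : ℕ} (w : Fin n → List α) : List (Fin n → Option α) :=
  (List.range (Finset.univ.sup fun i => (w i).length)).map fun k i => (w i)[k]?

/-- A binary relation on words is regular if the language of convolutions of its pairs
is regular. -/
def IsRegularRel2 {α : Type} (r : List α → List α → Prop) : Prop :=
  IsRegularLang {w | ∃ u v, r u v ∧ w = conv2 u v}

/-- An `n`-ary relation on words is regular if the language of convolutions of its tuples
is regular. -/
def IsRegularRel {α : Type} {n : ℕ} (R : (Fin n → List α) → Prop) : Prop :=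
  IsRegularLang {w | ∃ t, R t ∧ w = conv t}

/-! ### Ordinal heights of well-founded relations -/

/-- The rank `r_A(x) = sup { r_A(y) + 1 : (y,x) ∈ R }` of an element of a well-founded
relation. -/
noncomputable def wfRank {β : Type} {r : β → β → Prop} (h : WellFounded r) (x : β) :
    Ordinal :=
  (h.apply x).rank

/-- The ordinal height `r(A) = sup { r_A(x) : x ∈ A }` of a well-founded relation. -/
noncomputable def relHeight {β : Type} {r : β → β → Prop} (h : WellFounded r) : Ordinal :=
  ⨆ x, wfRank h x

/-! ### Computable ordinals -/

/-- An ordinal is computable if it is the order type of a computable (decidable) well-ordering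
of (a decidable set of) natural numbers. -/
def IsComputableOrdinal (α : Ordinal) : Prop :=
  ∃ (A : Set ℕ) (r : ℕ → ℕ → Prop) (_ : ComputablePred fun n => n ∈ A)
    (_ : ComputablePred fun p : ℕ × ℕ => r p.1 p.2)
    (hwo : IsWellOrder {n // n ∈ A} fun x y => r x.1 y.1),
    @Ordinal.type _ _ hwo = α

/-- `ω₁^CK`, the least non-computable ordinal. -/
noncomputable def omega1CK : Ordinal :=
  sInf {α | ¬ IsComputableOrdinal α}

/-! ### Scott rank machinery for relational structures -/

section ScottRank

variable {D : Type}

/-- Atomic (quantifier-free) equivalence of two tuples in a relational structure with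
relations `rel i` of arity `ar i`: the tuples satisfy the same quantifier-free formulas. -/
def atomEquiv {ν : ℕ} {ar : Fin ν → ℕ} (rel : (i : Fin ν) → (Fin (ar i) → D) → Prop)
    {k : ℕ} (a b : Fin k → D) : Prop :=
  (∀ i j, a i = a j ↔ b i = b j) ∧
  ∀ (i : Fin ν) (f : Fin (ar i) → Fin k), rel i (a ∘ f) ↔ rel i (b ∘ f)

/-- The back-and-forth equivalence relations `ā ≡^α b̄` on tuples of a relational
structure. -/
noncomputable def bfEquiv {ν : ℕ} {ar : Fin ν → ℕ}
    (rel : (i : Fin ν) → (Fin (ar i) → D) → Prop)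
    (α : Ordinal) (k : ℕ) (a b : Fin k → D) : Prop :=
  if α = 0 then atomEquiv rel a b
  else ∀ β < α,
    (∀ (l : ℕ) (c : Fin l → D), ∃ d : Fin l → D,
      bfEquiv rel β (k + l) (Fin.append a c) (Fin.append b d)) ∧
    (∀ (l : ℕ) (d : Fin l → D), ∃ c : Fin l → D,
      bfEquiv rel β (k + l) (Fin.append a c) (Fin.append b d))
termination_by α
decreasing_by all_goals assumption

/-- An automorphism of a relational structure. -/
def IsAutomorphism {ν : ℕ} {ar : Fin ν → ℕ} (rel : (i : Fin ν) → (Fin (ar i) → D) → Prop)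
    (g : D ≃ D) : Prop :=
  ∀ (i : Fin ν) (t : Fin (ar i) → D), rel i t ↔ rel i fun j => g (t j)

/-- The Scott rank of a tuple: the least `β` such that `≡^β`-equivalence to the tuple implies
being in the same automorphism orbit. -/
noncomputable def tupleSR {ν : ℕ} {ar : Fin ν → ℕ}
    (rel : (i : Fin ν) → (Fin (ar i) → D) → Prop) {k : ℕ} (a : Fin k → D) : Ordinal :=
  sInf {β | ∀ b : Fin k → D, bfEquiv rel β k a b →
    ∃ g : D ≃ D, IsAutomorphism rel g ∧ ∀ i, g (a i) = b i}

/-- The Scott rank of a relational structure: the least ordinal greater than the Scott ranks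
of all finite tuples. -/
noncomputable def scottRank {ν : ℕ} {ar : Fin ν → ℕ}
    (rel : (i : Fin ν) → (Fin (ar i) → D) → Prop) : Ordinal :=
  sInf {γ | ∀ (k : ℕ) (a : Fin k → D), tupleSR rel a < γ}

end ScottRank

/-! ### Word structures: automatic and computable structures -/

/-- A structure `(A; R₁, …, R_ν)` whose domain is a set of words over the alphabet `α`,
with `ν` relations, the `i`-th of arity `ar i`. -/
structure WordStructure (α : Type) (ν : ℕ) (ar : Fin ν → ℕ) where
  dom : Set (List α)
  rel : (i : Fin ν) → (Fin (ar i) → List α) → Prop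
  rel_dom : ∀ i t, rel i t → ∀ j, t j ∈ dom

/-- The relations of a word structure, restricted to (the subtype of) its domain. -/
def WordStructure.relOn {α : Type} {ν : ℕ} {ar : Fin ν → ℕ} (S : WordStructure α ν ar) :
    (i : Fin ν) → (Fin (ar i) → ↥S.dom) → Prop :=
  fun i t => S.rel i fun j => ↑(t j)

/-- A word structure is automatic if its domain is a regular language and all its relations
are regular. -/
def WordStructure.IsAutomatic {α : Type} {ν : ℕ} {ar : Fin ν → ℕ}
    (S : WordStructure α ν ar) : Prop :=
  IsRegularLang S.dom ∧ ∀ i, IsRegularRel (S.rel i)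

/-- A word structure is computable if its domain and all its relations are computable. -/
def WordStructure.IsComputableStr {α : Type} [Primcodable α] {ν : ℕ} {ar : Fin ν → ℕ}
    (S : WordStructure α ν ar) : Prop :=
  ComputablePred (fun w : List α => w ∈ S.dom) ∧
    ∀ i, ComputablePred fun t : Fin (ar i) → List α => S.rel i t

/-- The Scott rank of a word structure. -/
noncomputable def WordStructure.SR {α : Type} {ν : ℕ} {ar : Fin ν → ℕ}
    (S : WordStructure α ν ar) : Ordinal :=
  scottRank S.relOn

/-! ### Abstract relational structures, isomorphism, ω-fold disjoint union -/

/-- An abstract relational structure with `ν` relations of arities `ar`. -/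
structure RelStruct (ν : ℕ) (ar : Fin ν → ℕ) where
  carrier : Type
  rel : (i : Fin ν) → (Fin (ar i) → carrier) → Prop

/-- The abstract relational structure underlying a word structure. -/
def WordStructure.toRelStruct {α : Type} {ν : ℕ} {ar : Fin ν → ℕ}
    (S : WordStructure α ν ar) : RelStruct ν ar :=
  ⟨↥S.dom, S.relOn⟩

/-- Isomorphism of abstract relational structures. -/
def RelStruct.Iso {ν : ℕ} {ar : Fin ν → ℕ} (S T : RelStruct ν ar) : Prop :=
  ∃ g : S.carrier ≃ T.carrier, ∀ i t, S.rel i t ↔ T.rel i fun j => g (t j)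

/-- The ω-fold disjoint union of an abstract relational structure: countably many disjoint
copies, a relation holding of a tuple iff all components lie in the same copy and the
corresponding tuple satisfies the relation in the original structure. -/
def omegaFold {ν : ℕ} {ar : Fin ν → ℕ} (S : RelStruct ν ar) : RelStruct ν ar :=
  ⟨S.carrier × ℕ, fun i t => (∀ j j', (t j).2 = (t j').2) ∧ S.rel i fun j => (t j).1⟩

/-! ### Trees and Cantor–Bendixson rank -/

/-- `(T, le)` is a partial order tree: `le` is a partial order with a least element in which
every set `{x : x ≤ y}` is finite and linearly ordered. -/
def IsPOTree {T : Type} (le : T → T → Prop) : Prop :=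
  (∀ x, le x x) ∧ (∀ x y z, le x y → le y z → le x z) ∧
  (∀ x y, le x y → le y x → x = y) ∧
  (∃ r, ∀ x, le r x) ∧
  (∀ y, {x | le x y}.Finite ∧ ∀ x z, le x y → le z y → le x z ∨ le z x)

/-- `(T, S)` is a successor tree: the reflexive–transitive closure of `S` is a partial order
tree. -/
def IsSuccTree {T : Type} (S : T → T → Prop) : Prop :=
  IsPOTree (Relation.ReflTransGen S)

/-- The derivative of (a subset of) a successor tree: the set of nodes lying on at least two
distinct infinite paths within the subset. -/
def treeDeriv {T : Type} (S : T → T → Prop) (X : Set T) : Set T :=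
  {x ∈ X | ∃ p q : ℕ → T, p 0 = x ∧ q 0 = x ∧ (∀ n, p n ∈ X) ∧ (∀ n, q n ∈ X) ∧
    (∀ n, S (p n) (p (n + 1))) ∧ (∀ n, S (q n) (q (n + 1))) ∧ p ≠ q}

/-- The transfinite iteration of the tree derivative, starting from the whole tree. -/
noncomputable def treeDerivIter {T : Type} (S : T → T → Prop) (α : Ordinal) : Set T :=
  Ordinal.limitRecOn α Set.univ (fun _ X => treeDeriv S X)
    (fun o _ ih => ⋂ (β : Ordinal) (h : β < o), ih β h)

/-- The Cantor–Bendixson rank of a successor tree: the least `α` such that the `α`-th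
derivative equals the `α+1`-st derivative. -/
noncomputable def CBrank {T : Type} (S : T → T → Prop) : Ordinal :=
  sInf {α | treeDerivIter S (α + 1) = treeDerivIter S α}

/-- The derivative of (a subset of) a partial order tree: the set of nodes lying on at least
two distinct infinite paths (i.e. admitting two eventually incomparable infinite strictly
increasing chains) within the subset. -/
def poDeriv {T : Type} (le : T → T → Prop) (X : Set T) : Set T :=
  {x ∈ X | ∃ p q : ℕ → T, p 0 = x ∧ q 0 = x ∧ (∀ n, p n ∈ X) ∧ (∀ n, q n ∈ X) ∧
    (∀ n, le (p n) (p (n + 1)) ∧ p n ≠ p (n + 1)) ∧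
    (∀ n, le (q n) (q (n + 1)) ∧ q n ≠ q (n + 1)) ∧
    ∃ n m, ¬ le (p n) (q m) ∧ ¬ le (q m) (p n)}

noncomputable def poDerivIter {T : Type} (le : T → T → Prop) (α : Ordinal) : Set T :=
  Ordinal.limitRecOn α Set.univ (fun _ X => poDeriv le X)
    (fun o _ ih => ⋂ (β : Ordinal) (h : β < o), ih β h)

/-- The Cantor–Bendixson rank of a partial order tree. -/
noncomputable def CBrankPO {T : Type} (le : T → T → Prop) : Ordinal :=
  sInf {α | poDerivIter le (α + 1) = poDerivIter le α}

/-- The product of two successor trees, where `r₂` is the root of the second tree. -/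
def prodSucc {T₁ T₂ : Type} (S₁ : T₁ → T₁ → Prop) (S₂ : T₂ → T₂ → Prop) (r₂ : T₂) :
    T₁ × T₂ → T₁ × T₂ → Prop :=
  fun p q =>
    (p.2 = r₂ ∧ ((q.1 = p.1 ∧ S₂ p.2 q.2) ∨ (S₁ p.1 q.1 ∧ p.2 = q.2))) ∨
    (p.2 ≠ r₂ ∧ q.1 = p.1 ∧ S₂ p.2 q.2)

/-! ### Locally finite graphs -/

/-- A directed graph is locally finite if every vertex has finitely many neighbours
(in either direction). -/
def LocallyFiniteGraph {V : Type} (E : V → V → Prop) : Prop :=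
  ∀ x, {y | E x y ∨ E y x}.Finite

/-- A graph as a relational structure with one binary relation. -/
def graphRel {V : Type} (E : V → V → Prop) : (i : Fin 1) → (Fin 2 → V) → Prop :=
  fun _ t => E (t 0) (t 1)

/-- `ball E U n` is the `n`-neighbourhood of `U`: vertices reachable from `U` by `n` or fewer
edges (traversed in either direction). -/
def ball {V : Type} (E : V → V → Prop) (U : Set V) : ℕ → Set V
  | 0 => U
  | n + 1 => ball E U n ∪ {v | ∃ u ∈ ball E U n, E u v ∨ E v u}

/-- Connectivity with respect to the symmetrization of `E`. -/
def conn {V : Type} (E : V → V → Prop) : V → V → Prop :=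
  Relation.ReflTransGen fun u v => E u v ∨ E v u

/-!
The example tree has a *kernel*, the full `K`-ary tree of words `u` over `K`, and below each kernel
node `u` a *copy*, whose node `(u, w)` moves either by appending `ext` to `w`, or by moving the last
letter `k` of `u` to `w` as `pop k`. Below `(u, w)` at most `|u|` further `pop` moves can be made,
so the `n`-th derivative consists of the kernel and of the copy nodes with `|u| ≥ n`, and the
`ω`-th derivative is the kernel. For two kernel letters the kernel is perfect and the rank is `ω`;
for one kernel letter the kernel is a single path, which vanishes at the next step, and the rank
is `ω + 1`.

Written as words `u` and `u ♯ w`, the tree is automatic: a `pop` move shifts the tail `♯ w` one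
place to the left, which an automaton checks on the convolution by remembering one letter.
-/

open Function Relation Set

/-! ### Successor trees and Cantor–Bendixson rank -/

section SuccTree

variable {T : Type} {S : T → T → Prop}

lemma eq_or_lt_of_reflTransGen (height : T → ℕ) (hS : ∀ a b, S a b → height a < height b)
    {a b : T} (h : ReflTransGen S a b) : a = b ∨ height a < height b := by
  induction h with
  | refl => exact .inl rfl
  | tail _ hbc ih =>
    have := hS _ _ hbc
    right
    rcases ih with rfl | h <;> omega

lemma reflTransGen_of_exists_parent (height : T → ℕ)
    (hS : ∀ a b, S a b → height a < height b) {root : T}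
    (hparent : ∀ a, a ≠ root → ∃ b, S b a) (a : T) : ReflTransGen S root a := by
  induction h : height a using Nat.strong_induction_on generalizing a with
  | _ n ih =>
    by_cases ha : a = root
    · exact ha ▸ .refl
    · obtain ⟨b, hb⟩ := hparent a ha
      exact (ih _ (h ▸ hS b a hb) b rfl).tail hb

lemma eq_or_reflTransGen_of_succ (hunique : ∀ a b c, S a c → S b c → a = b) {a b c : T}
    (hac : ReflTransGen S a c) (hbc : S b c) : a = c ∨ ReflTransGen S a b := by
  rcases hac.cases_tail with rfl | ⟨d, had, hdc⟩
  · exact .inl rfl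
  · exact .inr (hunique d b c hdc hbc ▸ had)

theorem isSuccTree_of_height (height : T → ℕ) (root : T)
    (hS : ∀ a b, S a b → height a < height b) (hunique : ∀ a b c, S a c → S b c → a = b)
    (hparent : ∀ a, a ≠ root → ∃ b, S b a) : IsSuccTree S := by
  have root_le := reflTransGen_of_exists_parent height hS hparent
  have antisymm (a b : T) (hab : ReflTransGen S a b) (hba : ReflTransGen S b a) : a = b := by
    rcases eq_or_lt_of_reflTransGen height hS hab with h | h
    · exact h
    rcases eq_or_lt_of_reflTransGen height hS hba with h' | h'
    · exact h'.symm
    · omega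
  refine ⟨fun _ => .refl, fun _ _ _ => .trans, antisymm, ⟨root, root_le⟩, fun c => ?_⟩
  induction root_le c with
  | refl =>
    have hsub : {a | ReflTransGen S a root} ⊆ {root} := fun a ha =>
      antisymm a root ha (root_le a)
    refine ⟨(finite_singleton root).subset hsub, fun a a' ha ha' => ?_⟩
    rw [hsub ha, hsub ha']
    exact .inl .refl
  | @tail b c _ hbc ih =>
    have hsub : {a | ReflTransGen S a c} ⊆ insert c {a | ReflTransGen S a b} :=
      fun a ha => eq_or_reflTransGen_of_succ hunique ha hbc
    refine ⟨ih.1.insert c |>.subset hsub, fun a a' ha ha' => ?_⟩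
    rcases hsub ha with rfl | ha
    · exact .inr ha'
    rcases hsub ha' with rfl | ha'
    · exact .inl ha
    exact ih.2 a a' ha ha'

end SuccTree

section TreeDeriv

variable {T : Type} {S : T → T → Prop} {X Y : Set T} {x y z : T}

def IsPathIn (S : T → T → Prop) (X : Set T) (p : ℕ → T) : Prop :=
  (∀ n, p n ∈ X) ∧ ∀ n, S (p n) (p (n + 1))

def HasPathIn (S : T → T → Prop) (X : Set T) (x : T) : Prop :=
  ∃ p, p 0 = x ∧ IsPathIn S X p

lemma mem_treeDeriv_iff : x ∈ treeDeriv S X ↔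
    x ∈ X ∧ ∃ p q, p 0 = x ∧ q 0 = x ∧ IsPathIn S X p ∧ IsPathIn S X q ∧ p ≠ q := by
  constructor
  · rintro ⟨hx, p, q, hp0, hq0, hpX, hqX, hpS, hqS, hpq⟩
    exact ⟨hx, p, q, hp0, hq0, ⟨hpX, hpS⟩, ⟨hqX, hqS⟩, hpq⟩
  · rintro ⟨hx, p, q, hp0, hq0, ⟨hpX, hpS⟩, ⟨hqX, hqS⟩, hpq⟩
    exact ⟨hx, p, q, hp0, hq0, hpX, hqX, hpS, hqS, hpq⟩

lemma treeDeriv_subset : treeDeriv S X ⊆ X := fun _ hx => hx.1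

lemma IsPathIn.cons {p : ℕ → T} (hp : IsPathIn S X p) (hx : x ∈ X) (hxp : S x (p 0)) :
    IsPathIn S X (Stream'.cons x p) :=
  ⟨fun | 0 => hx | n + 1 => hp.1 n, fun | 0 => hxp | n + 1 => hp.2 n⟩

lemma mem_treeDeriv_of_succ (hx : x ∈ X) (hxy : S x y) (hy : y ∈ treeDeriv S X) :
    x ∈ treeDeriv S X := by
  obtain ⟨-, p, q, rfl, hq0, hp, hq, hpq⟩ := mem_treeDeriv_iff.1 hy
  refine mem_treeDeriv_iff.2 ⟨hx, _, _, rfl, rfl, hp.cons hx hxy, hq.cons hx (hq0 ▸ hxy), ?_⟩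
  exact fun h => hpq (funext fun n => congrFun h (n + 1))

lemma mem_treeDeriv_of_branch (hx : x ∈ X) (hxy : S x y) (hxz : S x z) (hyz : y ≠ z)
    (hy : HasPathIn S X y) (hz : HasPathIn S X z) : x ∈ treeDeriv S X := by
  obtain ⟨p, rfl, hp⟩ := hy
  obtain ⟨q, rfl, hq⟩ := hz
  exact mem_treeDeriv_iff.2 ⟨hx, _, _, rfl, rfl, hp.cons hx hxy, hq.cons hx hxz,
    fun h => hyz (congrFun h 1)⟩

lemma notMem_treeDeriv_of_unique_succ (hx : x ∈ Y)
    (hclosed : ∀ y ∈ Y, ∀ z ∈ X, S y z → z ∈ Y)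
    (hunique : ∀ y ∈ Y, ∀ z ∈ X, ∀ z' ∈ X, S y z → S y z' → z = z') :
    x ∉ treeDeriv S X := by
  intro hx'
  obtain ⟨-, p, q, hp0, hq0, hp, hq, hpq⟩ := mem_treeDeriv_iff.1 hx'
  have h (n : ℕ) : p n = q n ∧ p n ∈ Y := by
    induction n with
    | zero => exact ⟨hp0.trans hq0.symm, hp0 ▸ hx⟩
    | succ n ih =>
      have hS := hq.2 n
      rw [← ih.1] at hS
      exact ⟨hunique _ ih.2 _ (hp.1 _) _ (hq.1 _) (hp.2 n) hS,
        hclosed _ ih.2 _ (hp.1 _) (hp.2 n)⟩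
  exact hpq (funext fun n => (h n).1)

end TreeDeriv

section CBrank

variable {T : Type} {S : T → T → Prop}

@[simp] lemma treeDerivIter_zero : treeDerivIter S 0 = univ := by
  simp [treeDerivIter]

lemma treeDerivIter_add_one (α : Ordinal) :
    treeDerivIter S (α + 1) = treeDeriv S (treeDerivIter S α) := by
  rw [treeDerivIter, Ordinal.limitRecOn_add_one]
  rfl

lemma treeDerivIter_of_isSuccLimit {o : Ordinal} (ho : Order.IsSuccLimit o) :
    treeDerivIter S o = ⋂ β < o, treeDerivIter S β := by
  rw [treeDerivIter, Ordinal.limitRecOn_limit _ _ _ _ ho]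
  rfl

lemma CBrank_eq_of_fixed_of_forall_lt {α : Ordinal}
    (hfix : treeDerivIter S (α + 1) = treeDerivIter S α)
    (hmove : ∀ β < α, treeDerivIter S (β + 1) ≠ treeDerivIter S β) : CBrank S = α :=
  IsLeast.csInf_eq ⟨hfix, fun _ hβ => not_lt.1 fun hlt => hmove _ hlt hβ⟩

end CBrank

section Equiv

variable {T T' : Type} {S : T → T → Prop} {S' : T' → T' → Prop} (e : T ≃ T')

lemma isPathIn_comp_iff (hS : ∀ a b, S' (e a) (e b) ↔ S a b) {Y : Set T'} {p : ℕ → T} :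
    IsPathIn S' Y (e ∘ p) ↔ IsPathIn S (e ⁻¹' Y) p := by
  simp [IsPathIn, hS]

lemma preimage_treeDeriv (hS : ∀ a b, S' (e a) (e b) ↔ S a b) (Y : Set T') :
    e ⁻¹' treeDeriv S' Y = treeDeriv S (e ⁻¹' Y) := by
  ext x
  simp only [mem_preimage, mem_treeDeriv_iff]
  constructor
  · rintro ⟨hx, p, q, hp0, hq0, hp, hq, hpq⟩
    obtain ⟨p, rfl⟩ := e.surjective.comp_left p
    obtain ⟨q, rfl⟩ := e.surjective.comp_left q
    exact ⟨hx, p, q, e.injective hp0, e.injective hq0, (isPathIn_comp_iff e hS).1 hp,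
      (isPathIn_comp_iff e hS).1 hq, fun h => hpq (h ▸ rfl)⟩
  · rintro ⟨hx, p, q, hp0, hq0, hp, hq, hpq⟩
    exact ⟨hx, e ∘ p, e ∘ q, congrArg e hp0, congrArg e hq0, (isPathIn_comp_iff e hS).2 hp,
      (isPathIn_comp_iff e hS).2 hq, fun h => hpq (e.injective.comp_left h)⟩

lemma preimage_treeDerivIter (hS : ∀ a b, S' (e a) (e b) ↔ S a b) (α : Ordinal) :
    e ⁻¹' treeDerivIter S' α = treeDerivIter S α := by
  induction α using Ordinal.limitRecOn with
  | zero => simp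
  | add_one α ih =>
    rw [treeDerivIter_add_one, treeDerivIter_add_one, preimage_treeDeriv e hS, ih]
  | limit o ho ih =>
    rw [treeDerivIter_of_isSuccLimit ho, treeDerivIter_of_isSuccLimit ho, preimage_iInter₂]
    exact iInter₂_congr ih

lemma CBrank_eq_of_equiv (hS : ∀ a b, S' (e a) (e b) ↔ S a b) : CBrank S' = CBrank S := by
  simp only [CBrank, ← preimage_treeDerivIter e hS, (preimage_injective.2 e.surjective).eq_iff]

lemma IsSuccTree.of_equiv (hS : ∀ a b, S' (e a) (e b) ↔ S a b) (h : IsSuccTree S) :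
    IsSuccTree S' := by
  have hle (a b : T) : ReflTransGen S' (e a) (e b) ↔ ReflTransGen S a b := by
    constructor
    · intro hab
      simpa [onFun] using ReflTransGen.lift (p := S) e.symm
        (fun x y hxy => by simpa [onFun, ← hS] using hxy) _ _ hab
    · exact ReflTransGen.lift e (fun x y hxy => (hS x y).2 hxy) _ _
  obtain ⟨-, -, hanti, ⟨r, hr⟩, hfin⟩ := h
  refine ⟨fun x => .refl, fun _ _ _ => .trans, ?_, ⟨e r, ?_⟩, ?_⟩
  · simp only [← e.forall_congr_right, hle]
    exact fun a b hab hba => congrArg e (hanti a b hab hba)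
  · simpa only [← e.forall_congr_right, hle] using hr
  · simp only [← e.forall_congr_right, hle]
    refine fun b => ⟨?_, (hfin b).2⟩
    have : {x | ReflTransGen S' x (e b)} = e '' {a | ReflTransGen S a b} := by
      ext x; obtain ⟨a, rfl⟩ := e.surjective x; simp [hle]
    exact this ▸ (hfin b).1.image e

end Equiv

section WordEncoding

variable {N A : Type} {R : N → N → Prop} {f : N → List A}

lemma map_ofInjective_iff (hf : Injective f) (a b : N) :
    Relation.Map R f f (Equiv.ofInjective f hf a) (Equiv.ofInjective f hf b) ↔ R a b := by
  simp [Relation.Map, hf.eq_iff]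

theorem IsSuccTree.map (hf : Injective f) (h : IsSuccTree R) :
    IsSuccTree fun x y : range f => Relation.Map R f f x y :=
  h.of_equiv (Equiv.ofInjective f hf) (map_ofInjective_iff hf)

theorem CBrank_map (hf : Injective f) :
    CBrank (fun x y : range f => Relation.Map R f f x y) = CBrank R :=
  CBrank_eq_of_equiv (Equiv.ofInjective f hf) (map_ofInjective_iff hf)

end WordEncoding

section Conv2

variable {α : Type}

@[simp] lemma conv2_nil_nil : conv2 ([] : List α) [] = [] := rfl

@[simp] lemma conv2_nil_singleton (b : α) : conv2 [] [b] = [(none, some b)] := rfl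

@[simp] lemma conv2_cons_cons (a b : α) (u v : List α) :
    conv2 (a :: u) (b :: v) = (some a, some b) :: conv2 u v := by
  simp [conv2, List.range_succ_eq_map, Function.comp_def]

lemma conv2_append_of_length_eq {u u' : List α} (h : u.length = u'.length) (v v' : List α) :
    conv2 (u ++ v) (u' ++ v') = conv2 u u' ++ conv2 v v' := by
  induction u generalizing u' with
  | nil => simp_all [List.length_eq_zero_iff.1 h.symm]
  | cons a u ih =>
    obtain ⟨b, u', rfl⟩ := List.exists_cons_of_length_pos (h ▸ Nat.succ_pos _ : 0 < u'.length)
    simp [ih (Nat.succ_injective h)]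

lemma conv2_append_append (u v v' : List α) :
    conv2 (u ++ v) (u ++ v') = conv2 u u ++ conv2 v v' :=
  conv2_append_of_length_eq rfl v v'

lemma conv2_self_append (u v : List α) : conv2 u (u ++ v) = conv2 u u ++ conv2 [] v := by
  simpa using conv2_append_of_length_eq rfl [] v

end Conv2

/-! ### The example tree -/

inductive Node (K : Type) where
  | kernel (u : List K)
  | copy (u : List K) (w : List (Option K))

namespace Node

variable {K : Type}

inductive Succ : Node K → Node K → Prop
  | grow (k : K) (u : List K) : Succ (kernel u) (kernel (k :: u))
  | branch (u : List K) : Succ (kernel u) (copy u [])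
  | ext (u : List K) (w : List (Option K)) : Succ (copy u w) (copy u (none :: w))
  | pop (k : K) (u : List K) (w : List (Option K)) :
      Succ (copy (k :: u) w) (copy u (some k :: w))

def height : Node K → ℕ
  | kernel u => u.length
  | copy u w => u.length + 2 * w.length + 1

lemma height_lt_of_succ {a b : Node K} (h : Succ a b) : a.height < b.height := by
  cases h <;> simp only [height, List.length_cons] <;> omega

lemma eq_of_succ_of_succ {a b c : Node K} (ha : Succ a c) (hb : Succ b c) : a = b := by
  cases ha <;> cases hb <;> rfl

lemma exists_succ_of_ne_root : ∀ a : Node K, a ≠ kernel [] → ∃ b, Succ b a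
  | kernel [], h => absurd rfl h
  | kernel (k :: u), _ => ⟨_, .grow k u⟩
  | copy u [], _ => ⟨_, .branch u⟩
  | copy u (none :: w), _ => ⟨_, .ext u w⟩
  | copy u (some k :: w), _ => ⟨_, .pop k u w⟩

theorem isSuccTree_succ : IsSuccTree (Succ (K := K)) :=
  isSuccTree_of_height height (kernel []) (fun _ _ => height_lt_of_succ)
    (fun _ _ _ => eq_of_succ_of_succ) exists_succ_of_ne_root

/-- The number of `pop` moves still available below a node. -/
def budget : Node K → ℕ∞
  | kernel _ => ⊤
  | copy u _ => u.length

@[simp] lemma budget_kernel (u : List K) : (kernel u).budget = ⊤ := rfl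

@[simp] lemma budget_copy (u : List K) (w : List (Option K)) :
    (copy u w).budget = u.length := rfl

lemma budget_eq_top_iff {a : Node K} : a.budget = ⊤ ↔ a ∈ range kernel := by
  cases a <;> simp

lemma hasPathIn_kernel (k : K) {X : Set (Node K)} (hX : range kernel ⊆ X) (u : List K) :
    HasPathIn Succ X (kernel u) :=
  ⟨fun n => kernel (List.replicate n k ++ u), rfl, fun _ => hX ⟨_, rfl⟩, fun _ => .grow k _⟩

lemma hasPathIn_copy {X : Set (Node K)} {u : List K} (hX : ∀ w, copy u w ∈ X)
    (w : List (Option K)) : HasPathIn Succ X (copy u w) :=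
  ⟨fun n => copy u (List.replicate n none ++ w), rfl, fun _ => hX _, fun _ => .ext u _⟩

lemma kernel_mem_treeDeriv_budget_ge [Nonempty K] (n : ℕ) (u : List K) :
    kernel u ∈ treeDeriv Succ {a : Node K | n ≤ a.budget} := by
  obtain ⟨k⟩ := ‹Nonempty K›
  -- a kernel node `u` with `n ≤ |u|` branches into the kernel and into a copy of budget `|u|`
  suffices ∀ m u, n ≤ u.length + m →
      kernel u ∈ treeDeriv Succ {a : Node K | n ≤ a.budget} from this n u (by omega)
  intro m
  induction m with
  | zero =>
    intro u hu
    refine mem_treeDeriv_of_branch (by simp) (.grow k u) (.branch u) (by simp)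
      (hasPathIn_kernel k (by rintro _ ⟨v, rfl⟩; simp) _) (hasPathIn_copy (fun _ => ?_) _)
    simpa using hu
  | succ m ih =>
    intro u hu
    exact mem_treeDeriv_of_succ (by simp) (.grow k u) (ih _ (by simp; omega))

lemma copy_mem_treeDeriv_budget_ge {n : ℕ} {u : List K} (hu : n < u.length)
    (w : List (Option K)) : copy u w ∈ treeDeriv Succ {a : Node K | n ≤ a.budget} := by
  obtain ⟨k, u, rfl⟩ := List.exists_cons_of_length_pos (by omega : 0 < u.length)
  simp only [List.length_cons] at hu
  have hmem {v : List K} (hv : n ≤ v.length) (w' : List (Option K)) :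
      copy v w' ∈ {a : Node K | n ≤ a.budget} := by
    simpa using hv
  exact mem_treeDeriv_of_branch (hmem (by simp; omega) w) (.ext _ w) (.pop k u w) (by simp)
    (hasPathIn_copy (hmem (by simp; omega)) _) (hasPathIn_copy (hmem (by omega)) _)

/-- Among the nodes of budget at least `u.length`, a copy node over `u` can only move by `ext`. -/
lemma copy_notMem_treeDeriv_budget_ge (u : List K) (w : List (Option K)) :
    copy u w ∉ treeDeriv Succ {a : Node K | u.length ≤ a.budget} := by
  have hX : ∀ {w' a}, Succ (copy u w') a → (u.length : ℕ∞) ≤ a.budget →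
      a = copy u (none :: w') := by
    rintro w' a (_ | _ | _ | ⟨k, v, _⟩) ha
    · rfl
    · simp only [budget_copy, Nat.cast_le, List.length_cons] at ha
      omega
  refine notMem_treeDeriv_of_unique_succ (Y := range (copy u)) ⟨w, rfl⟩ ?_ ?_
  · rintro _ ⟨w', rfl⟩ a ha hs
    exact ⟨_, (hX hs ha).symm⟩
  · rintro _ ⟨w', rfl⟩ a ha a' ha' hs hs'
    rw [hX hs ha, hX hs' ha']

lemma treeDeriv_budget_ge [Nonempty K] (n : ℕ) :
    treeDeriv Succ {a : Node K | n ≤ a.budget} = {a | ((n + 1 : ℕ) : ℕ∞) ≤ a.budget} := by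
  ext (u | ⟨u, w⟩)
  · simp [kernel_mem_treeDeriv_budget_ge]
  · simp only [mem_ofPred_eq, budget_copy, Nat.cast_le]
    refine ⟨fun h => ?_, fun h => copy_mem_treeDeriv_budget_ge h w⟩
    have hn : n ≤ u.length := by simpa using treeDeriv_subset h
    rcases hn.lt_or_eq with hn | rfl
    · exact hn
    · exact absurd h (copy_notMem_treeDeriv_budget_ge u w)

lemma treeDerivIter_natCast [Nonempty K] (n : ℕ) :
    treeDerivIter Succ (n : Ordinal) = {a : Node K | n ≤ a.budget} := by
  induction n with
  | zero => simp
  | succ n ih => rw [Nat.cast_succ, treeDerivIter_add_one, ih, treeDeriv_budget_ge]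

lemma treeDerivIter_omega0 [Nonempty K] :
    treeDerivIter Succ Ordinal.omega0 = range (kernel (K := K)) := by
  ext a
  simp only [treeDerivIter_of_isSuccLimit Ordinal.isSuccLimit_omega0, mem_iInter,
    Ordinal.lt_omega0, ← budget_eq_top_iff, ENat.eq_top_iff_forall_ge]
  constructor
  · exact fun h n => by simpa [treeDerivIter_natCast] using h n ⟨n, rfl⟩
  · rintro h _ ⟨n, rfl⟩
    simpa [treeDerivIter_natCast] using h n

lemma treeDerivIter_natCast_add_one_ne [Nonempty K] (n : ℕ) :
    treeDerivIter Succ ((n : Ordinal) + 1) ≠ treeDerivIter (Succ (K := K)) n := by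
  obtain ⟨k⟩ := ‹Nonempty K›
  rw [← Nat.cast_succ, treeDerivIter_natCast, treeDerivIter_natCast]
  intro h
  have := congrArg (copy (List.replicate n k) [] ∈ ·) h
  simp at this
  norm_cast at this
  omega

lemma treeDeriv_range_kernel_of_ne {k k' : K} (hk : k ≠ k') :
    treeDeriv Succ (range (kernel (K := K))) = range kernel := by
  refine subset_antisymm treeDeriv_subset ?_
  rintro _ ⟨u, rfl⟩
  exact mem_treeDeriv_of_branch ⟨u, rfl⟩ (.grow k u) (.grow k' u) (by simp [hk])
    (hasPathIn_kernel k subset_rfl _) (hasPathIn_kernel k' subset_rfl _)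

lemma treeDeriv_range_kernel_of_subsingleton [Subsingleton K] :
    treeDeriv Succ (range (kernel (K := K))) = ∅ := by
  have hX : ∀ {u a}, Succ (kernel u) a → a ∈ range (kernel (K := K)) →
      ∃ k, a = kernel (k :: u) := by
    rintro u a (_ | _) ha
    · exact ⟨_, rfl⟩
    · simp at ha
  refine eq_empty_of_forall_notMem fun a ha => ?_
  obtain ⟨u, rfl⟩ := treeDeriv_subset ha
  refine notMem_treeDeriv_of_unique_succ (Y := range kernel) ⟨u, rfl⟩ (fun _ _ _ h _ => h) ?_ ha
  rintro _ ⟨v, rfl⟩ a ha a' ha' hs hs'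
  obtain ⟨k, rfl⟩ := hX hs ha
  obtain ⟨k', rfl⟩ := hX hs' ha'
  rw [Subsingleton.elim k k']

theorem CBrank_succ_of_ne {k k' : K} (hk : k ≠ k') :
    CBrank (Succ (K := K)) = Ordinal.omega0 := by
  have : Nonempty K := ⟨k⟩
  refine CBrank_eq_of_fixed_of_forall_lt ?_ fun β hβ => ?_
  · rw [treeDerivIter_add_one, treeDerivIter_omega0, treeDeriv_range_kernel_of_ne hk]
  · obtain ⟨n, rfl⟩ := Ordinal.lt_omega0.1 hβ
    exact treeDerivIter_natCast_add_one_ne n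

theorem CBrank_succ_of_subsingleton [Nonempty K] [Subsingleton K] :
    CBrank (Succ (K := K)) = Ordinal.omega0 + 1 := by
  have hω : treeDerivIter Succ (Ordinal.omega0 + 1) = (∅ : Set (Node K)) := by
    rw [treeDerivIter_add_one, treeDerivIter_omega0, treeDeriv_range_kernel_of_subsingleton]
  refine CBrank_eq_of_fixed_of_forall_lt ?_ fun β hβ => ?_
  · rw [treeDerivIter_add_one, hω]
    exact subset_empty_iff.1 treeDeriv_subset
  rcases (Order.lt_add_one_iff.1 hβ).lt_or_eq with hβ | rfl
  · obtain ⟨n, rfl⟩ := Ordinal.lt_omega0.1 hβ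
    exact treeDerivIter_natCast_add_one_ne n
  · rw [hω, treeDerivIter_omega0]
    exact (range_nonempty kernel).ne_empty.symm

end Node

/-! ### Encoding the tree by words -/

inductive Letter (K : Type) where
  | ker (k : K)
  | sep
  | ext
  | pop (k : K)
deriving DecidableEq, Fintype

namespace Letter

variable {K : Type}

def ofTail : Option K → Letter K
  | none => ext
  | some k => pop k

@[simp] lemma ofTail_none : ofTail (none : Option K) = ext := rfl

@[simp] lemma ofTail_some (k : K) : ofTail (some k) = pop k := rfl

def isTail : Letter K → Bool
  | ext | pop _ => true
  | _ => false

@[simp] lemma isTail_ofTail (x : Option K) : (ofTail x).isTail := by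
  cases x <;> rfl

lemma exists_ofTail_of_isTail : ∀ {c : Letter K}, c.isTail → ∃ x, ofTail x = c
  | .ext, _ => ⟨none, rfl⟩
  | .pop k, _ => ⟨some k, rfl⟩

end Letter

open Letter (ofTail)

namespace Node

variable {K : Type}

def kernelWord (u : List K) : List (Letter K) := (u.map .ker).reverse

def tailWord (w : List (Option K)) : List (Letter K) := (w.map ofTail).reverse

/-- Nodes keep `u` and `w` newest letter first, words are written oldest letter first: then every
move appends a letter to the word, except a `pop`, which shifts the separator and the tail one
place to the left. -/
def word : Node K → List (Letter K)
  | kernel u => kernelWord u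
  | copy u w => kernelWord u ++ .sep :: tailWord w

@[simp] lemma kernelWord_nil : kernelWord ([] : List K) = [] := rfl

@[simp] lemma tailWord_nil : tailWord ([] : List (Option K)) = [] := rfl

@[simp] lemma kernelWord_cons (k : K) (u : List K) :
    kernelWord (k :: u) = kernelWord u ++ [.ker k] := by
  simp [kernelWord]

@[simp] lemma kernelWord_append_singleton (u : List K) (k : K) :
    kernelWord (u ++ [k]) = Letter.ker k :: kernelWord u := by
  simp [kernelWord]

@[simp] lemma tailWord_cons (x : Option K) (w : List (Option K)) :
    tailWord (x :: w) = tailWord w ++ [ofTail x] := by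
  simp [tailWord]

@[simp] lemma tailWord_append_singleton (w : List (Option K)) (x : Option K) :
    tailWord (w ++ [x]) = ofTail x :: tailWord w := by
  simp [tailWord]

lemma sep_notMem_kernelWord (u : List K) : Letter.sep ∉ kernelWord u := by
  simp [kernelWord]

lemma sep_notMem_tailWord (w : List (Option K)) : Letter.sep ∉ tailWord w := by
  simp only [tailWord, List.mem_reverse, List.mem_map, not_exists, not_and]
  rintro (_ | _) _ ⟨⟩

lemma isTail_of_mem_tailWord {w : List (Option K)} {c : Letter K} (h : c ∈ tailWord w) :
    c.isTail := by
  obtain ⟨x, -, rfl⟩ := List.mem_map.1 (List.mem_reverse.1 h)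
  exact Letter.isTail_ofTail x

lemma word_injective : Injective (word (K := K)) := by
  have hker : Injective (kernelWord (K := K)) := fun u v h => by
    simpa [kernelWord, (List.map_injective_iff.2 fun _ _ => Letter.ker.inj).eq_iff] using h
  have htail : Injective (tailWord (K := K)) := fun w w' h => by
    have hof : Injective (ofTail (K := K)) := by rintro (_ | _) (_ | _) h <;> cases h <;> rfl
    simpa [tailWord, (List.map_injective_iff.2 hof).eq_iff] using h
  rintro (u | ⟨u, w⟩) (u' | ⟨u', w'⟩) h <;> simp only [word] at h
  · rw [hker h]
  · exact absurd (h ▸ List.mem_append_right _ List.mem_cons_self) (sep_notMem_kernelWord u)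
  · exact absurd (h ▸ List.mem_append_right _ List.mem_cons_self) (sep_notMem_kernelWord u')
  · obtain ⟨hu, -, hw⟩ := (List.append_cons_inj_of_notMem (sep_notMem_kernelWord u)
      (sep_notMem_tailWord w)).1 h
    rw [hker hu, htail hw]

/-- Embeds the tree into the subtree below `kernel [x]`. -/
def pushBottom (x : K) : Node K → Node K
  | kernel u => kernel (u ++ [x])
  | copy u w => copy (u ++ [x]) w

@[simp] lemma word_pushBottom (x : K) (a : Node K) :
    (pushBottom x a).word = .ker x :: a.word := by
  cases a <;> simp [pushBottom, word]

lemma Succ.pushBottom {a b : Node K} (h : Succ a b) (x : K) :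
    Succ (a.pushBottom x) (b.pushBottom x) := by
  cases h
  exacts [.grow _ _, .branch _, .ext _ _, .pop _ _ _]

/-! ### The automata -/

inductive DomState where
  | kernel
  | tail
  | dead
deriving DecidableEq

instance : Fintype DomState := ⟨{.kernel, .tail, .dead}, by rintro (_ | _ | _) <;> simp⟩

variable (K) in
@[simps]
def domDFA : DFA (Letter K) DomState where
  step s c := match s, c with
    | .kernel, .ker _ => .kernel
    | .kernel, .sep => .tail
    | .tail, c => if c.isTail then .tail else .dead
    | _, _ => .dead
  start := .kernel
  accept := {.kernel, .tail}

@[simp] lemma domDFA_evalFrom_dead (t : List (Letter K)) :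
    (domDFA K).evalFrom .dead t = .dead := by
  induction t <;> simp_all

lemma domDFA_evalFrom_kernelWord (u : List K) :
    (domDFA K).evalFrom .kernel (kernelWord u) = .kernel := by
  induction u with
  | nil => rfl
  | cons k u ih => simp [DFA.evalFrom_of_append, ih]

lemma domDFA_evalFrom_tailWord (w : List (Option K)) :
    (domDFA K).evalFrom .tail (tailWord w) = .tail := by
  induction w with
  | nil => rfl
  | cons x w ih => simp [DFA.evalFrom_of_append, ih]

lemma exists_tailWord_of_domDFA : ∀ t : List (Letter K),
    (domDFA K).evalFrom .tail t ∈ (domDFA K).accept → ∃ w, tailWord w = t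
  | [], _ => ⟨[], rfl⟩
  | c :: t, h => by
    by_cases hc : c.isTail
    · obtain ⟨x, rfl⟩ := Letter.exists_ofTail_of_isTail hc
      obtain ⟨w, rfl⟩ := exists_tailWord_of_domDFA t (by simpa using h)
      exact ⟨w ++ [x], by simp⟩
    · simp [hc] at h

lemma mem_range_word_of_domDFA : ∀ t : List (Letter K),
    (domDFA K).evalFrom .kernel t ∈ (domDFA K).accept → t ∈ range word
  | [], _ => ⟨kernel [], rfl⟩
  | .ker x :: t, h => by
    obtain ⟨a, rfl⟩ := mem_range_word_of_domDFA t h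
    exact ⟨a.pushBottom x, by simp⟩
  | .sep :: t, h => by
    obtain ⟨w, rfl⟩ := exists_tailWord_of_domDFA t h
    exact ⟨copy [] w, rfl⟩
  | .ext :: t, h | .pop _ :: t, h => by simp at h

theorem isRegularLang_range_word : IsRegularLang (range (word (K := K))) := by
  refine ⟨DomState, inferInstance, domDFA K,
    Set.ext fun t => ⟨mem_range_word_of_domDFA t, ?_⟩⟩
  rintro ⟨u | ⟨u, w⟩, rfl⟩ <;> refine (DFA.mem_accepts _).2 ?_
  · simp [DFA.eval, word, domDFA_evalFrom_kernelWord]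
  · simp [DFA.eval, word, DFA.evalFrom_of_append, domDFA_evalFrom_kernelWord,
      domDFA_evalFrom_tailWord]

inductive StepState (K : Type) where
  | start
  | copyTail
  | chain (k : K) (p : Letter K)
  | done
  | dead
deriving DecidableEq, Fintype

variable [DecidableEq K]

variable (K) in
/-- Accepts the convolutions of `word a` and `word b` for the moves `Succ a b`. After the common
kernel prefix, an `ext` move leaves a diagonal tail followed by `(◇, ext)`, and a `pop k` move
leaves the tail shifted by one place: in state `chain k p` the second word must repeat the letter
`p` just read in the first one, until it ends with `pop k`. -/
@[simps]
def stepDFA : DFA (Option (Letter K) × Option (Letter K)) (StepState K) where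
  step s c := match s, c with
    | .start, (some (.ker x), some (.ker y)) => if x = y then .start else .dead
    | .start, (some (.ker k), some .sep) => .chain k .sep
    | .start, (some .sep, some .sep) => .copyTail
    | .start, (none, some (.ker _)) => .done
    | .start, (none, some .sep) => .done
    | .copyTail, (some x, some y) => if x = y ∧ x.isTail then .copyTail else .dead
    | .copyTail, (none, some .ext) => .done
    | .chain k p, (some x, some y) => if x = p ∧ y.isTail then .chain k y else .dead
    | _, _ => .dead
  start := .start
  accept := {s | s = .done ∨ ∃ k, s = .chain k (.pop k)}

@[simp] lemma stepDFA_evalFrom_dead (t : List (Option (Letter K) × Option (Letter K))) :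
    (stepDFA K).evalFrom .dead t = .dead := by
  induction t <;> simp_all

lemma eq_nil_of_stepDFA_evalFrom_done {t : List (Option (Letter K) × Option (Letter K))}
    (h : (stepDFA K).evalFrom .done t ∈ (stepDFA K).accept) : t = [] := by
  cases t
  · rfl
  · simp at h

lemma stepDFA_evalFrom_start_kernelWord (u : List K) :
    (stepDFA K).evalFrom .start (conv2 (kernelWord u) (kernelWord u)) = .start := by
  induction u with
  | nil => rfl
  | cons k u ih => simp [conv2_append_append, DFA.evalFrom_of_append, ih]

lemma stepDFA_evalFrom_copyTail {W : List (Letter K)} (hW : ∀ c ∈ W, c.isTail) :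
    (stepDFA K).evalFrom .copyTail (conv2 W W) = .copyTail := by
  induction W with
  | nil => rfl
  | cons c W ih => simp_all

lemma stepDFA_evalFrom_chain {k : K} {W : List (Letter K)} (hW : ∀ c ∈ W, c.isTail)
    {q : Letter K} (hq : q.isTail) (p : Letter K) :
    (stepDFA K).evalFrom (.chain k p) (conv2 (p :: W) (W ++ [q])) = .chain k q := by
  induction W generalizing p with
  | nil => simp [hq]
  | cons c W ih => simp_all

theorem conv2_word_mem_accepts {a b : Node K} (h : Succ a b) :
    conv2 a.word b.word ∈ (stepDFA K).accepts := by
  have htail (w : List (Option K)) := fun c => isTail_of_mem_tailWord (w := w) (c := c)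
  refine (DFA.mem_accepts _).2 ?_
  cases h with
  | grow k u | branch u =>
    simp [word, conv2_self_append, DFA.eval, DFA.evalFrom_of_append,
      stepDFA_evalFrom_start_kernelWord]
  | ext u w =>
    simp [word, conv2_self_append, conv2_append_append, DFA.eval,
      DFA.evalFrom_of_append, stepDFA_evalFrom_start_kernelWord,
      stepDFA_evalFrom_copyTail (htail w)]
  | pop k u w =>
    simp [word, conv2_append_append, DFA.eval, DFA.evalFrom_of_append,
      stepDFA_evalFrom_start_kernelWord, stepDFA_evalFrom_chain (htail w) (q := .pop k) rfl]

lemma exists_tailWord_of_copyTail : ∀ t : List (Option (Letter K) × Option (Letter K)),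
    (stepDFA K).evalFrom .copyTail t ∈ (stepDFA K).accept →
      ∃ w, conv2 (tailWord w) (tailWord w ++ [.ext]) = t
  | [], h => by simp at h
  | (none, some .ext) :: t, h => ⟨[], by simp [eq_nil_of_stepDFA_evalFrom_done (t := t) h]⟩
  | (some x, some y) :: t, h => by
    by_cases hxy : x = y ∧ x.isTail
    · obtain ⟨rfl, hx⟩ := hxy
      obtain ⟨z, rfl⟩ := Letter.exists_ofTail_of_isTail hx
      obtain ⟨w, rfl⟩ := exists_tailWord_of_copyTail t (by simpa [hx] using h)
      exact ⟨w ++ [z], by simp⟩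
    · simp [hxy] at h
  | (none, none) :: t, h | (none, some (.ker _)) :: t, h | (none, some .sep) :: t, h
  | (none, some (.pop _)) :: t, h | (some _, none) :: t, h => by simp at h

lemma exists_tailWord_of_chain {k : K} : ∀ (t : List (Option (Letter K) × Option (Letter K)))
    (p : Letter K), (stepDFA K).evalFrom (.chain k p) t ∈ (stepDFA K).accept →
      p = .pop k ∧ t = [] ∨ ∃ w, conv2 (p :: tailWord w) (tailWord w ++ [.pop k]) = t
  | [], p, h => .inl ⟨by simpa using h, rfl⟩
  | (some x, some y) :: t, p, h => by
    by_cases hxy : x = p ∧ y.isTail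
    · obtain ⟨rfl, hy⟩ := hxy
      right
      obtain ⟨z, rfl⟩ := Letter.exists_ofTail_of_isTail hy
      rcases exists_tailWord_of_chain t _ (by simpa [hy] using h) with ⟨hz, rfl⟩ | ⟨w, rfl⟩
      · exact ⟨[], by simp [hz]⟩
      · exact ⟨w ++ [z], by simp⟩
    · simp [hxy] at h
  | (none, _) :: t, p, h | (some _, none) :: t, p, h => by simp at h

lemma exists_succ_of_stepDFA : ∀ t : List (Option (Letter K) × Option (Letter K)),
    (stepDFA K).evalFrom .start t ∈ (stepDFA K).accept →
      ∃ a b, Succ a b ∧ conv2 a.word b.word = t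
  | [], h => by simp at h
  | (some (.ker x), some (.ker y)) :: t, h => by
    by_cases hxy : x = y
    · subst hxy
      obtain ⟨a, b, hab, rfl⟩ := exists_succ_of_stepDFA t (by simpa using h)
      exact ⟨_, _, hab.pushBottom x, by simp⟩
    · simp [hxy] at h
  | (some (.ker k), some .sep) :: t, h => by
    rcases exists_tailWord_of_chain t .sep h with ⟨h, -⟩ | ⟨w, rfl⟩
    · cases h
    · exact ⟨copy [k] w, copy [] (some k :: w), .pop k [] w, by simp [word]⟩
  | (some .sep, some .sep) :: t, h => by
    obtain ⟨w, rfl⟩ := exists_tailWord_of_copyTail t h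
    exact ⟨copy [] w, copy [] (none :: w), .ext [] w, by simp [word]⟩
  | (none, some (.ker k)) :: t, h =>
    ⟨kernel [], kernel [k], .grow k [], by
      simp [word, eq_nil_of_stepDFA_evalFrom_done (t := t) h]⟩
  | (none, some .sep) :: t, h =>
    ⟨kernel [], copy [] [], .branch [], by
      simp [word, eq_nil_of_stepDFA_evalFrom_done (t := t) h]⟩
  | (none, none) :: t, h | (none, some .ext) :: t, h | (none, some (.pop _)) :: t, h
  | (some _, none) :: t, h | (some (.ker _), some .ext) :: t, h
  | (some (.ker _), some (.pop _)) :: t, h | (some .sep, some (.ker _)) :: t, h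
  | (some .sep, some .ext) :: t, h | (some .sep, some (.pop _)) :: t, h
  | (some .ext, some _) :: t, h | (some (.pop _), some _) :: t, h => by simp at h

theorem isRegularRel2_map_succ [Fintype K] :
    IsRegularRel2 (Relation.Map (Succ (K := K)) word word) := by
  refine ⟨StepState K, inferInstance, stepDFA K, Set.ext fun t => ⟨fun h => ?_, ?_⟩⟩
  · obtain ⟨a, b, hab, rfl⟩ := exists_succ_of_stepDFA t ((DFA.mem_accepts _).1 h)
    exact ⟨_, _, ⟨a, b, hab, rfl, rfl⟩, rfl⟩
  · rintro ⟨_, _, ⟨a, b, hab, rfl, rfl⟩, rfl⟩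
    exact conv2_word_mem_accepts hab

end Node

theorem exists_automatic_succTree_of_CBrank_succ_eq (K : Type) [Fintype K] [DecidableEq K]
    {α : Ordinal} (hα : CBrank (Node.Succ (K := K)) = α) :
    ∃ (A : Type) (_ : Fintype A) (dom : Set (List A)) (S : List A → List A → Prop)
      (_ : ∀ x y, S x y → x ∈ dom ∧ y ∈ dom),
      IsRegularLang dom ∧ IsRegularRel2 S ∧
      IsSuccTree (fun x y : ↥dom => S ↑x ↑y) ∧
      CBrank (fun x y : ↥dom => S ↑x ↑y) = α :=
  ⟨Letter K, inferInstance, range Node.word, Relation.Map Node.Succ Node.word Node.word,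
    fun _ _ ⟨a, b, _, ha, hb⟩ => ⟨⟨a, ha⟩, ⟨b, hb⟩⟩, Node.isRegularLang_range_word,
    Node.isRegularRel2_map_succ, Node.isSuccTree_succ.map Node.word_injective,
    (CBrank_map Node.word_injective).trans hα⟩

/-- **Examples.** There is an automatic successor tree of Cantor–Bendixson rank exactly `ω`,
and there is an automatic successor tree of Cantor–Bendixson rank exactly `ω + 1`. -/
theorem automatic_succ_tree_CB_rank_omega_and_omega_add_one :
    (∃ (A : Type) (_ : Fintype A) (dom : Set (List A)) (S : List A → List A → Prop)
      (_ : ∀ x y, S x y → x ∈ dom ∧ y ∈ dom),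
      IsRegularLang dom ∧ IsRegularRel2 S ∧
      IsSuccTree (fun x y : ↥dom => S ↑x ↑y) ∧
      CBrank (fun x y : ↥dom => S ↑x ↑y) = Ordinal.omega0) ∧
    (∃ (A : Type) (_ : Fintype A) (dom : Set (List A)) (S : List A → List A → Prop)
      (_ : ∀ x y, S x y → x ∈ dom ∧ y ∈ dom),
      IsRegularLang dom ∧ IsRegularRel2 S ∧
      IsSuccTree (fun x y : ↥dom => S ↑x ↑y) ∧
      CBrank (fun x y : ↥dom => S ↑x ↑y) = Ordinal.omega0 + 1) :=
  ⟨exists_automatic_succTree_of_CBrank_succ_eq Bool (Node.CBrank_succ_of_ne Bool.false_ne_true),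
    exists_automatic_succTree_of_CBrank_succ_eq Unit Node.CBrank_succ_of_subsingleton⟩

end AutoStruct
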